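/- Let Φ be a valued constraint language over a finite domain D containing every unary cost function D → ℝ̄≥0. Suppose there are distinct a,b ∈ D and a ternary cost function g ∈ ⟨Φ⟩_v whose set of points of finite value is exactly {(a,a,a),(a,b,b),(b,a,b),(b,b,a)}. Then Φ is not weakly submodular. -/

import Mathlib

open scoped NNRat ENNReal

/-- A cost function of some arity over domain `D`, taking values in `ℝ≥0 ∪ {∞}`. -/
abbrev CFun (D : Type) : Type := Σ k : ℕ, (Fin k → D) → ℝ≥0∞

/-- The binary crisp equality cost function. -/
noncomputable def eqC (D : Type) [DecidableEq D] : (Fin 2 → D) → ℝ≥0∞ :=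
  fun x => if x 0 = x 1 then 0 else ⊤

/-- `f` is definable by a psm-formula over `Φ ∪ {eq}`: a minimisation over `k`
bound variables of a sum of `m` atomic formulas. -/
def InVClone {D : Type} [Fintype D] [DecidableEq D] (Φ : Set (CFun D)) {n : ℕ}
    (f : (Fin n → D) → ℝ≥0∞) : Prop :=
  ∃ (k m : ℕ) (ar : Fin m → ℕ) (g : ∀ j : Fin m, (Fin (ar j) → D) → ℝ≥0∞)
    (sc : ∀ j : Fin m, Fin (ar j) → Fin (n + k)),
    (∀ j : Fin m, (⟨ar j, g j⟩ : CFun D) ∈ Φ ∨ (⟨ar j, g j⟩ : CFun D) = ⟨2, eqC D⟩) ∧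
    ∀ x : Fin n → D, f x = ⨅ y : Fin k → D, ∑ j : Fin m, g j (fun i => Fin.append x y (sc j i))

/-- Weak submodularity of a valued constraint language. -/
def WeaklySubmodular {D : Type} [Fintype D] [DecidableEq D] (Φ : Set (CFun D)) : Prop :=
  ∀ f : (Fin 2 → D) → ℝ≥0∞, InVClone Φ f → ∀ a b : D,
    f ![a, a] + f ![b, b] ≤ f ![a, b] + f ![b, a] ∨ (f ![a, a] = ⊤ ∧ f ![b, b] = ⊤)

/-! Put a unary cost `C` on the value `a` of the third coordinate of `g` and minimise it out,
giving a binary `f` in the valued clone. Since `g (a, a, c)` is finite only for `c = a`, the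
charge is unavoidable at `(a, a)`: `C ≤ f (a, a) < ⊤`. At `(a, b)` and `(b, a)` the third
coordinate `b` is free of charge, so `f (a, b) + f (b, a) ≤ g (a, b, b) + g (b, a, b)`, and taking
`C` larger than this sum breaks weak submodularity at the pair `a, b`. -/

namespace InVClone

variable {D : Type} [Fintype D] [DecidableEq D] {Φ : Set (CFun D)} {n : ℕ}

theorem add_atom {f : (Fin n → D) → ℝ≥0∞} (hf : InVClone Φ f) {r : ℕ}
    {h : (Fin r → D) → ℝ≥0∞} (hh : (⟨r, h⟩ : CFun D) ∈ Φ) (σ : Fin r → Fin n) :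
    InVClone Φ (fun x => h (x ∘ σ) + f x) := by
  obtain ⟨k, m, ar, g, sc, hmem, hf⟩ := hf
  refine ⟨k, m + 1, Fin.cons r ar, Fin.cons h g,
    Fin.cons (fun i => Fin.castAdd k (σ i)) sc, ?_, fun x => ?_⟩
  · intro j
    induction j using Fin.cases with
    | zero => exact Or.inl hh
    | succ j => exact hmem j
  · show _ + f x = _
    rw [hf, ENNReal.add_iInf]
    refine iInf_congr fun y => ?_
    rw [Fin.sum_univ_succ]
    congr 1
    exact congrArg h (funext fun i => (Fin.append_left x y (σ i)).symm)

theorem iInf_snoc {f : (Fin (n + 1) → D) → ℝ≥0∞} (hf : InVClone Φ f) :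
    InVClone Φ (fun x => ⨅ c, f (Fin.snoc x c)) := by
  obtain ⟨k, m, ar, g, sc, hmem, hf⟩ := hf
  refine ⟨k + 1, m, ar, g, fun j i => Fin.cast (Nat.succ_add_eq_add_succ ..) (sc j i), hmem,
    fun x => ?_⟩
  simp only [hf, Fin.append_left_snoc]
  rw [← (Fin.consEquiv fun _ => D).iInf_comp, iInf_prod]
  rfl

end InVClone

theorem not_weaklySubmodular_of_lt {D : Type} [Fintype D] [DecidableEq D] {Φ : Set (CFun D)}
    {f : (Fin 2 → D) → ℝ≥0∞} (hf : InVClone Φ f) {a b : D} (ha : f ![a, a] ≠ ⊤)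
    (hlt : f ![a, b] + f ![b, a] < f ![a, a] + f ![b, b]) : ¬ WeaklySubmodular Φ := fun hΦ =>
  (hΦ f hf a b).elim (fun hle => hlt.not_ge hle) fun htop => ha htop.1

theorem not_weaklySubmodular_of_ternary_general
    {D : Type} [Fintype D] [DecidableEq D]
    (Φ : Set (CFun D))
    (hcons : ∀ u : D → ℝ≥0∞, (⟨1, fun x => u (x 0)⟩ : CFun D) ∈ Φ)
    (a b : D) (hab : a ≠ b)
    (g : (Fin 3 → D) → ℝ≥0∞) (hg : InVClone Φ g)
    (hfin : {x : Fin 3 → D | g x ≠ ⊤} =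
      {![a, a, a], ![a, b, b], ![b, a, b], ![b, b, a]}) :
    ¬ WeaklySubmodular Φ := by
  have hg_ne_top : ∀ x, g x ≠ ⊤ ↔
      x = ![a, a, a] ∨ x = ![a, b, b] ∨ x = ![b, a, b] ∨ x = ![b, b, a] :=
    fun x => Set.ext_iff.mp hfin x
  have hg_aa : ∀ c ≠ a, g ![a, a, c] = ⊤ := by
    intro c hc
    by_contra h
    simp [hg_ne_top, hc, hab] at h
  set C := g ![a, b, b] + g ![b, a, b] + 1
  let u : D → ℝ≥0∞ := fun c => if c = a then C else 0
  let f : (Fin 2 → D) → ℝ≥0∞ := fun x => ⨅ c, u c + g (Fin.snoc x c)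
  have hf : InVClone Φ f := (hg.add_atom (hcons u) fun _ => Fin.last 2).iInf_snoc
  have hf_aa : C ≤ f ![a, a] := le_iInf fun c => by
    rcases eq_or_ne c a with rfl | hc
    · simp [u]
    · simp [hg_aa c hc]
  have hf_aa_ne_top : f ![a, a] ≠ ⊤ := by
    refine ne_top_of_le_ne_top ?_ (iInf_le _ a)
    simp [u, C, hg_ne_top]
  have hf_ab : f ![a, b] ≤ g ![a, b, b] :=
    (iInf_le _ b).trans (by simp [u, hab.symm])
  have hf_ba : f ![b, a] ≤ g ![b, a, b] :=
    (iInf_le _ b).trans (by simp [u, hab.symm])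
  refine not_weaklySubmodular_of_lt hf (b := b) hf_aa_ne_top ?_
  calc f ![a, b] + f ![b, a] ≤ g ![a, b, b] + g ![b, a, b] := add_le_add hf_ab hf_ba
    _ < C := ENNReal.lt_add_right (by simp [hg_ne_top]) one_ne_zero
    _ ≤ f ![a, a] := hf_aa
    _ ≤ f ![a, a] + f ![b, b] := le_self_add

/-- If `Φ` contains every unary cost function and its valued
clone contains a ternary cost function `g` whose points of finite value are
exactly `{(a,a,a), (a,b,b), (b,a,b), (b,b,a)}` for some distinct `a, b`, then
`Φ` is not weakly submodular. -/
theorem not_weaklySubmodular_of_ternary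
    {D : Type} [Fintype D] [DecidableEq D] (hD : 2 ≤ Fintype.card D)
    (Φ : Set (CFun D))
    (hcons : ∀ u : D → ℝ≥0∞, (⟨1, fun x => u (x 0)⟩ : CFun D) ∈ Φ)
    (a b : D) (hab : a ≠ b)
    (g : (Fin 3 → D) → ℝ≥0∞) (hg : InVClone Φ g)
    (hfin : {x : Fin 3 → D | g x ≠ ⊤} =
      {![a, a, a], ![a, b, b], ![b, a, b], ![b, b, a]}) :
    ¬ WeaklySubmodular Φ :=
  not_weaklySubmodular_of_ternary_general Φ hcons a b hab g hg hfin
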